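/- For every integer g ≥ 1, with respect to the graded reverse lexicographic order, the polynomials f_1^g, f_2^g, f_3^g are monic (leading coefficient 1) with leading monomials In(f_1^g) = α^g, In(f_2^g) = α^{g−1}β, and In(f_3^g) = α^{g−1}γ respectively. -/

import Mathlib

noncomputable section

open PowerSeries

/-- The polynomial ring `ℚ[α,β,γ]`. -/
abbrev R3 : Type := MvPolynomial (Fin 3) ℚ

/-- The fraction field `K = ℚ(α,β,γ)`. -/
abbrev K3 : Type := FractionRing R3

/-- The image of `α` in `K`. -/
def al : K3 := algebraMap R3 K3 (MvPolynomial.X 0)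
/-- The image of `β` in `K`. -/
def be : K3 := algebraMap R3 K3 (MvPolynomial.X 1)
/-- The image of `γ` in `K`. -/
def ga : K3 := algebraMap R3 K3 (MvPolynomial.X 2)

/-- The binomial series `(1 - β t²)^{-1/2} = ∑_{n≥0} C(2n,n) (β t²/4)^n`. -/
def Sq : PowerSeries K3 :=
  PowerSeries.mk fun k => if k % 2 = 0 then
    ((k.choose (k / 2) : ℚ) : K3) * (be / 4) ^ (k / 2) else 0

/-- The exponent `E(t) = α t + (α + 2γ/β) ∑_{m≥1} β^m t^{2m+1}/(2m+1)`;
its coefficient in degree `k = 2m+1 ≥ 3` is `(α + 2γ/β) β^{(k-1)/2} / k`. -/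
def Ex : PowerSeries K3 :=
  PowerSeries.mk fun k =>
    if k = 1 then al
    else if k % 2 = 1 then (al + 2 * ga / be) * be ^ ((k - 1) / 2) / (k : K3)
    else 0

/-- The formal exponential `exp E = ∑_n E^n/n!` of the power series `E`
(which has zero constant term, so each coefficient is a finite sum). -/
def ExpEx : PowerSeries K3 :=
  PowerSeries.mk fun k =>
    ∑ n ∈ Finset.range (k + 1), PowerSeries.coeff (R := K3) k (Ex ^ n) / (n.factorial : K3)

/-- The generating function `Φ(t) = (1 - βt²)^{-1/2} exp(E(t))`. -/
def Phi : PowerSeries K3 := Sq * ExpEx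

/-- `φ_k`, the `k`-th coefficient of `Φ`. -/
def phi (k : ℕ) : K3 := PowerSeries.coeff (R := K3) k Phi

/-- `Φ^{(r)} = r! φ_r`, the `r`-th formal derivative of `Φ` at `t = 0`. -/
def PhiD (r : ℕ) : K3 := (r.factorial : K3) * phi r

/-- `f_1^g := Φ^{(g)}`. -/
def f1 (g : ℕ) : K3 := PhiD g
/-- `f_2^g := (1/g²)(Φ^{(g+1)} - α Φ^{(g)})`. -/
def f2 (g : ℕ) : K3 := (1 / (g : K3) ^ 2) * (PhiD (g + 1) - al * PhiD g)
/-- `f_3^g := (1/(2g(g+1)))(Φ^{(g+2)} - α Φ^{(g+1)} - (g+1)² β Φ^{(g)})`. -/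
def f3 (g : ℕ) : K3 :=
  (1 / (2 * (g : K3) * ((g : K3) + 1))) *
    (PhiD (g + 2) - al * PhiD (g + 1) - ((g : K3) + 1) ^ 2 * be * PhiD g)

/-- `m` is smaller than `m'` in the graded reverse lexicographic order with
`α > β > γ`: compare first by total degree, and for equal total degree
`m < m'` iff the last nonzero entry of the exponent difference `m - m'`
(entries listed in the order `α, β, γ`) is positive, i.e. `m` has a larger
`γ`-exponent, or equal `γ`-exponents and a larger `β`-exponent. -/
def GrevlexLt (m m' : Fin 3 →₀ ℕ) : Prop :=
  (m 0 + m 1 + m 2 < m' 0 + m' 1 + m' 2) ∨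
  (m 0 + m 1 + m 2 = m' 0 + m' 1 + m' 2 ∧
    (m' 2 < m 2 ∨ (m 2 = m' 2 ∧ m' 1 < m 1)))

/-- `p` is monic with leading monomial `m` with respect to the graded reverse
lexicographic order: the coefficient of `m` in `p` is `1` and every other
monomial occurring in `p` is smaller than `m`. -/
def IsMonicWithLeadingMonomial (p : R3) (m : Fin 3 →₀ ℕ) : Prop :=
  MvPolynomial.coeff m p = 1 ∧ ∀ m' ∈ p.support, m' ≠ m → GrevlexLt m' m

-- ### auxiliary development


lemma be_ne : be ≠ 0 := by
  have h := IsFractionRing.injective R3 K3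
  simpa [be, map_eq_zero_iff _ h] using MvPolynomial.X_ne_zero (R := ℚ) (1 : Fin 3)

lemma constantCoeff_Ex : constantCoeff (R := K3) Ex = 0 := by
  simp [Ex, ← coeff_zero_eq_constantCoeff]

lemma coeff_Ex_pow_eq_zero {k m : ℕ} (h : k < m) : coeff (R := K3) k (Ex ^ m) = 0 := by
  have hX : (X : K3⟦X⟧) ^ m ∣ Ex ^ m :=
    pow_dvd_pow_of_dvd (X_dvd_iff.mpr constantCoeff_Ex) m
  exact X_pow_dvd_iff.mp hX k h

def S (N : ℕ) : PowerSeries K3 := ∑ m ∈ Finset.range N, (m.factorial : K3)⁻¹ • Ex ^ m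

lemma coeff_ExpEx_eq {k N : ℕ} (h : k < N) : coeff (R := K3) k ExpEx = coeff (R := K3) k (S N) := by
  rw [ExpEx, coeff_mk, S, map_sum]
  have hc : ∀ n : ℕ, coeff (R := K3) k ((n.factorial : K3)⁻¹ • Ex ^ n)
      = coeff (R := K3) k (Ex ^ n) / (n.factorial : K3) := by
    intro n; rw [coeff_smul, smul_eq_mul, div_eq_inv_mul]
  simp only [hc]
  apply Finset.sum_subset (Finset.range_subset_range.mpr h)
  intro n _ hn
  rw [Finset.mem_range, not_lt] at hn
  rw [coeff_Ex_pow_eq_zero (by omega), zero_div]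

lemma derivative_ExpEx : d⁄dX K3 ExpEx = d⁄dX K3 Ex * ExpEx := by
  ext k
  have h1 : coeff (R := K3) k (d⁄dX K3 ExpEx) = coeff (R := K3) k (d⁄dX K3 (S (k + 2))) := by
    rw [coeff_derivative, coeff_derivative, coeff_ExpEx_eq (N := k + 2) (by omega)]
  have h2 : coeff (R := K3) k (d⁄dX K3 Ex * ExpEx) = coeff (R := K3) k (d⁄dX K3 Ex * S (k + 1)) := by
    rw [coeff_mul, coeff_mul]
    apply Finset.sum_congr rfl
    intro p hp
    rw [Finset.HasAntidiagonal.mem_antidiagonal] at hp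
    rw [coeff_ExpEx_eq (show p.2 < k + 1 by omega)]
  rw [h1, h2]
  have h3 : d⁄dX K3 (S (k + 2)) = d⁄dX K3 Ex * S (k + 1) := by
    rw [S, map_sum, Finset.sum_range_succ']
    simp only [pow_zero, Nat.factorial_zero, Nat.cast_one, inv_one, one_smul,
      map_one, Derivation.map_one_eq_zero, smul_zero, add_zero]
    rw [S, Finset.mul_sum]
    apply Finset.sum_congr rfl
    intro m _
    have hm : (Nat.factorial m : K3) ≠ 0 := Nat.cast_ne_zero.mpr m.factorial_ne_zero
    have hm1 : ((m + 1 : ℕ) : K3) ≠ 0 := Nat.cast_ne_zero.mpr (by omega)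
    have key : (((m + 1).factorial : ℕ) : K3)⁻¹ * ((m + 1 : ℕ) : K3)
        = ((m.factorial : ℕ) : K3)⁻¹ := by
      rw [Nat.factorial_succ, Nat.cast_mul, mul_inv,
        mul_comm (((m + 1 : ℕ) : K3))⁻¹, mul_assoc, inv_mul_cancel₀ hm1, mul_one]
    rw [Derivation.map_smul, Derivation.leibniz_pow, Nat.add_sub_cancel, smul_eq_mul,
      ← Nat.cast_smul_eq_nsmul K3 (m + 1), smul_smul, key, smul_eq_C_mul, smul_eq_C_mul]
    ring
  rw [h3]

-- ### coefficient lemmas for Sq and Ex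

lemma coeff_Sq_even (j : ℕ) :
    coeff (R := K3) (2 * j) Sq = (((2 * j).choose j : ℚ) : K3) * (be / 4) ^ j := by
  rw [Sq, coeff_mk, if_pos (Nat.mul_mod_right 2 j), Nat.mul_div_cancel_left j (by norm_num)]

lemma coeff_Sq_odd (n : ℕ) (h : n % 2 = 1) : coeff (R := K3) n Sq = 0 := by
  rw [Sq, coeff_mk, if_neg (by omega)]

lemma coeff_Ex_one : coeff (R := K3) 1 Ex = al := by rw [Ex, coeff_mk, if_pos rfl]

lemma coeff_Ex_even (n : ℕ) (h : n % 2 = 0) : coeff (R := K3) n Ex = 0 := by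
  rw [Ex, coeff_mk, if_neg (by omega), if_neg (by omega)]

lemma coeff_Ex_odd (j : ℕ) (h : 1 ≤ j) :
    coeff (R := K3) (2 * j + 1) Ex = (al + 2 * ga / be) * be ^ j / ((2 * j + 1 : ℕ) : K3) := by
  rw [Ex, coeff_mk, if_neg (by omega), if_pos (by omega)]
  norm_num

lemma charZeroK3 : CharZero K3 := inferInstance

lemma cb_id (j : ℕ) :
    (((2 * (j + 1)).choose (j + 1) : ℚ) : K3) * ((2 * j + 2 : ℕ) : K3)
      = 4 * ((2 * j + 1 : ℕ) : K3) * (((2 * j).choose j : ℚ) : K3) := by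
  have h := Nat.succ_mul_centralBinom_succ j
  rw [Nat.centralBinom, Nat.centralBinom] at h
  have h2 : ((2 * (j + 1)).choose (j + 1) : ℚ) * (2 * j + 2 : ℕ)
      = 4 * ((2 * j + 1 : ℕ) : ℚ) * ((2 * j).choose j : ℚ) := by
    have := congrArg (fun n : ℕ => (n : ℚ)) h
    push_cast at this ⊢
    linarith [this]
  calc (((2 * (j + 1)).choose (j + 1) : ℚ) : K3) * ((2 * j + 2 : ℕ) : K3)
      = ((((2 * (j + 1)).choose (j + 1) : ℚ) * ((2 * j + 2 : ℕ) : ℚ) : ℚ) : K3) := by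
        push_cast; ring
    _ = ((4 * ((2 * j + 1 : ℕ) : ℚ) * ((2 * j).choose j : ℚ) : ℚ) : K3) := by rw [h2]
    _ = 4 * ((2 * j + 1 : ℕ) : K3) * (((2 * j).choose j : ℚ) : K3) := by push_cast; ring

lemma L2 : ((1 : K3⟦X⟧) - C (R := K3) be * X ^ 2) * d⁄dX K3 Sq = C (R := K3) be * (X ^ 1 * Sq) := by
  ext k
  rw [sub_mul, one_mul, map_sub, mul_assoc, coeff_C_mul, coeff_X_pow_mul', coeff_C_mul,
    coeff_X_pow_mul']
  simp only [coeff_derivative]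
  rcases Nat.even_or_odd k with ⟨j, hj⟩ | ⟨j, hj⟩
  · subst hj
    rw [coeff_Sq_odd (j + j + 1) (by omega), zero_mul]
    by_cases hj1 : 1 ≤ j
    · rw [if_pos (by omega), if_pos (by omega), coeff_Sq_odd (j + j - 2 + 1) (by omega),
        coeff_Sq_odd (j + j - 1) (by omega)]
      ring
    · have : j = 0 := by omega
      subst this
      norm_num
  · subst hj
    rcases j with _ | i
    · -- k = 1
      norm_num
      rw [show (2 : ℕ) = 2 * 1 from rfl, coeff_Sq_even 1]
      have h0 : (constantCoeff (R := K3)) Sq = 1 := by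
        rw [← coeff_zero_eq_constantCoeff]
        simpa using coeff_Sq_even 0
      rw [h0, show Nat.choose 2 1 = 2 from rfl]
      push_cast
      ring
    · rw [if_pos (by omega), if_pos (by omega)]
      rw [show 2 * (i + 1) + 1 + 1 = 2 * (i + 2) from by ring, coeff_Sq_even (i + 2)]
      rw [show (2 * (i + 1) + 1 - 2 : ℕ) = 2 * i + 1 from by omega]
      rw [show (2 * i + 1 + 1 : ℕ) = 2 * (i + 1) from by ring, coeff_Sq_even (i + 1)]
      rw [show (2 * (i + 1) + 1 - 1 : ℕ) = 2 * (i + 1) from by omega, coeff_Sq_even (i + 1)]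
      have hcb : (((2 * (i + 2)).choose (i + 2) : ℚ) : K3) * ((2 * (i + 1) + 2 : ℕ) : K3)
          = 4 * ((2 * (i + 1) + 1 : ℕ) : K3) * (((2 * (i + 1)).choose (i + 1) : ℚ) : K3) := by
        have := cb_id (i + 1)
        rw [show (i + 1) + 1 = i + 2 from rfl] at this
        exact this
      push_cast at hcb ⊢
      linear_combination ((be / 4) ^ (i + 2)) * hcb

lemma L3 : ((1 : K3⟦X⟧) - C (R := K3) be * X ^ 2) * d⁄dX K3 Ex
    = C (R := K3) al + C (R := K3) (2 * ga) * X ^ 2 := by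
  ext k
  rw [sub_mul, one_mul, map_sub, mul_assoc, coeff_C_mul, coeff_X_pow_mul', map_add, coeff_C,
    coeff_C_mul_X_pow]
  simp only [coeff_derivative]
  match k with
  | 0 => rw [coeff_Ex_one]; norm_num
  | 1 =>
    rw [coeff_Ex_even (1 + 1) rfl]
    norm_num
  | 2 =>
    rw [if_pos (by norm_num), if_neg (by norm_num), if_pos rfl]
    have e1 : coeff (R := K3) (2 + 1) Ex = (al + 2 * ga / be) * be ^ 1 / ((2 * 1 + 1 : ℕ) : K3) :=
      coeff_Ex_odd 1 le_rfl
    rw [e1, show (2 - 2 + 1 : ℕ) = 1 from rfl, coeff_Ex_one]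
    norm_num
    rw [add_mul, div_mul_cancel₀ _ be_ne]
    ring
  | (n + 3) =>
    rcases Nat.even_or_odd n with ⟨j, hj⟩ | ⟨j, hj⟩
    · subst hj
      rw [coeff_Ex_even (j + j + 3 + 1) (by omega), if_pos (by omega), if_neg (by omega),
        if_neg (by omega)]
      rw [show j + j + 3 - 2 + 1 = 2 * j + 2 from by omega, coeff_Ex_even (2 * j + 2) (by omega)]
      ring
    · subst hj
      rw [if_pos (by omega), if_neg (by omega), if_neg (by omega)]
      rw [show 2 * j + 1 + 3 + 1 = 2 * (j + 2) + 1 from by ring, coeff_Ex_odd (j + 2) (by omega)]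
      rw [show (2 * j + 1 + 3 - 2 : ℕ) = 2 * (j + 1) from by omega]
      rw [coeff_Ex_odd (j + 1) (by omega)]
      have h1 : ((2 * (j + 2) + 1 : ℕ) : K3) ≠ 0 := Nat.cast_ne_zero.mpr (by omega)
      have h2 : ((2 * (j + 1) + 1 : ℕ) : K3) ≠ 0 := Nat.cast_ne_zero.mpr (by omega)
      push_cast at h1 h2 ⊢
      field_simp
      ring

lemma ODE : ((1 : K3⟦X⟧) - C (R := K3) be * X ^ 2) * d⁄dX K3 Phi
    = (C (R := K3) al + C (R := K3) be * X ^ 1 + C (R := K3) (2 * ga) * X ^ 2) * Phi := by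
  have hd : d⁄dX K3 Phi = d⁄dX K3 Sq * ExpEx + Sq * (d⁄dX K3 Ex * ExpEx) := by
    rw [Phi, Derivation.leibniz, smul_eq_mul, smul_eq_mul, derivative_ExpEx]
    ring
  rw [hd, Phi, mul_add]
  have e1 : ((1 : K3⟦X⟧) - C (R := K3) be * X ^ 2) * (d⁄dX K3 Sq * ExpEx)
      = (C (R := K3) be * (X ^ 1 * Sq)) * ExpEx := by rw [← mul_assoc, L2]
  have e2 : ((1 : K3⟦X⟧) - C (R := K3) be * X ^ 2) * (Sq * (d⁄dX K3 Ex * ExpEx))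
      = (C (R := K3) al + C (R := K3) (2 * ga) * X ^ 2) * (Sq * ExpEx) := by
    have h : ((1 : K3⟦X⟧) - C (R := K3) be * X ^ 2) * (Sq * (d⁄dX K3 Ex * ExpEx))
        = (((1 : K3⟦X⟧) - C (R := K3) be * X ^ 2) * d⁄dX K3 Ex) * (Sq * ExpEx) := by ring
    rw [h, L3]
  rw [e1, e2]
  ring

lemma phi_zero : phi 0 = 1 := by
  rw [phi, Phi, coeff_zero_eq_constantCoeff, map_mul]
  have h1 : constantCoeff (R := K3) Sq = 1 := by
    rw [← coeff_zero_eq_constantCoeff]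
    simpa using coeff_Sq_even 0
  have h2 : constantCoeff (R := K3) ExpEx = 1 := by
    rw [← coeff_zero_eq_constantCoeff, ExpEx, coeff_mk]
    simp
  rw [h1, h2, mul_one]

lemma phi_one : phi 1 = al * phi 0 := by
  have h := congrArg (coeff (R := K3) 0) ODE
  simp only [sub_mul, one_mul, map_sub, map_add, add_mul, mul_assoc, coeff_C_mul,
    coeff_X_pow_mul', coeff_derivative] at h
  norm_num at h
  simpa [phi] using h

lemma phi_two : (2 : K3) * phi 2 = al * phi 1 + be * phi 0 := by
  have h := congrArg (coeff (R := K3) 1) ODE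
  simp only [sub_mul, one_mul, map_sub, map_add, add_mul, mul_assoc, coeff_C_mul,
    coeff_X_pow_mul', coeff_derivative] at h
  norm_num at h
  simp only [phi, coeff_zero_eq_constantCoeff]
  linear_combination h

lemma recN (k : ℕ) : ((k : K3) + 3) * phi (k + 3)
    = al * phi (k + 2) + ((k : K3) + 2) * be * phi (k + 1) + 2 * ga * phi k := by
  have h := congrArg (coeff (R := K3) (k + 2)) ODE
  simp only [sub_mul, one_mul, map_sub, map_add, add_mul, mul_assoc, coeff_C_mul,
    coeff_X_pow_mul', coeff_derivative] at h
  rw [if_pos (by omega), if_pos (by omega), if_pos (by omega)] at h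
  simp only [Nat.add_sub_cancel, show k + 2 - 1 = k + 1 from rfl,
    show k + 2 + 1 = k + 3 from rfl] at h
  simp only [phi]
  push_cast at h ⊢
  linear_combination h

lemma PhiD_zero : PhiD 0 = 1 := by simp [PhiD, phi_zero]

lemma PhiD_one : PhiD 1 = al := by simp [PhiD, phi_one, phi_zero]

lemma PhiD_two : PhiD 2 = al ^ 2 + be := by
  have h2 := phi_two
  rw [phi_one, phi_zero] at h2
  rw [PhiD, show ((Nat.factorial 2 : ℕ) : K3) = 2 from by norm_num [Nat.factorial]]
  linear_combination h2

lemma PhiD_rec (k : ℕ) : PhiD (k + 3)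
    = al * PhiD (k + 2) + ((k : K3) + 2) ^ 2 * be * PhiD (k + 1)
      + 2 * ((k : K3) + 2) * ((k : K3) + 1) * ga * PhiD k := by
  have h := recN k
  simp only [PhiD]
  rw [show (k + 3).factorial = (k + 3) * ((k + 2) * ((k + 1) * k.factorial)) from by
      rw [Nat.factorial_succ, Nat.factorial_succ, Nat.factorial_succ],
    show (k + 2).factorial = (k + 2) * ((k + 1) * k.factorial) from by
      rw [Nat.factorial_succ, Nat.factorial_succ],
    show (k + 1).factorial = (k + 1) * k.factorial from Nat.factorial_succ k]
  push_cast
  linear_combination ((k : K3) + 2) * ((k : K3) + 1) * (k.factorial : K3) * h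

-- ### the polynomial family

def PP : ℕ → R3
  | 0 => 1
  | 1 => MvPolynomial.X 0
  | 2 => MvPolynomial.X 0 ^ 2 + MvPolynomial.X 1
  | (k + 3) => MvPolynomial.X 0 * PP (k + 2)
      + ((((k + 2) ^ 2 : ℕ)) : R3) * (MvPolynomial.X 1 * PP (k + 1))
      + (((2 * (k + 2) * (k + 1) : ℕ)) : R3) * (MvPolynomial.X 2 * PP k)

lemma al_def : algebraMap R3 K3 (MvPolynomial.X 0) = al := rfl
lemma be_def : algebraMap R3 K3 (MvPolynomial.X 1) = be := rfl
lemma ga_def : algebraMap R3 K3 (MvPolynomial.X 2) = ga := rfl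

lemma PP_spec : ∀ r, algebraMap R3 K3 (PP r) = PhiD r := by
  intro r
  induction r using Nat.strong_induction_on with
  | _ r ih =>
    match r with
    | 0 => rw [PP, map_one, PhiD_zero]
    | 1 => rw [PP, al_def, PhiD_one]
    | 2 => rw [PP, map_add, map_pow, al_def, be_def, PhiD_two]
    | (k + 3) =>
      have h2 := ih (k + 2) (by omega)
      have h1 := ih (k + 1) (by omega)
      have h0 := ih k (by omega)
      rw [PP, map_add, map_add, map_mul, map_mul, map_mul, map_mul, map_mul,
        h2, h1, h0, map_natCast, map_natCast, al_def, be_def, ga_def, PhiD_rec]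
      push_cast
      ring

def w3 : Fin 3 → ℕ := ![1, 2, 3]

lemma weight3 (d : Fin 3 →₀ ℕ) :
    (Finsupp.weight w3) d = d 0 * 1 + d 1 * 2 + d 2 * 3 := by
  rw [Finsupp.weight_apply, Finsupp.sum_fintype]
  · simp [Fin.sum_univ_three, w3]
  · intro i
    simp

open MvPolynomial in
lemma IWH_congr {p : R3} {n m : ℕ} (h : p.IsWeightedHomogeneous w3 n) (e : n = m) :
    p.IsWeightedHomogeneous w3 m := e ▸ h

open MvPolynomial in
lemma PP_hom : ∀ r, (PP r).IsWeightedHomogeneous w3 r := by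
  intro r
  have hX0 : (X (0 : Fin 3) : R3).IsWeightedHomogeneous w3 1 :=
    IWH_congr (isWeightedHomogeneous_X ℚ w3 0) rfl
  have hX1 : (X (1 : Fin 3) : R3).IsWeightedHomogeneous w3 2 :=
    IWH_congr (isWeightedHomogeneous_X ℚ w3 1) rfl
  have hX2 : (X (2 : Fin 3) : R3).IsWeightedHomogeneous w3 3 :=
    IWH_congr (isWeightedHomogeneous_X ℚ w3 2) rfl
  have hC : ∀ n : ℕ, ((n : R3)).IsWeightedHomogeneous w3 0 := by
    intro n
    rw [← map_natCast (MvPolynomial.C : ℚ →+* R3) n]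
    exact isWeightedHomogeneous_C w3 _
  induction r using Nat.strong_induction_on with
  | _ r ih =>
    match r with
    | 0 => rw [PP]; exact isWeightedHomogeneous_one ℚ w3
    | 1 => rw [PP]; exact hX0
    | 2 =>
      rw [PP]
      have hsq : (MvPolynomial.X (0 : Fin 3) ^ 2 : R3).IsWeightedHomogeneous w3 2 := by
        rw [pow_two]
        exact IWH_congr (hX0.mul hX0) rfl
      exact hsq.add hX1
    | (k + 3) =>
      have h2 := ih (k + 2) (by omega)
      have h1 := ih (k + 1) (by omega)
      have h0 := ih k (by omega)
      rw [PP]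
      apply IsWeightedHomogeneous.add
      apply IsWeightedHomogeneous.add
      · exact IWH_congr (hX0.mul h2) (show 1 + (k + 2) = k + 3 by omega)
      · exact IWH_congr ((hC _).mul (hX1.mul h1)) (show 0 + (2 + (k + 1)) = k + 3 by omega)
      · exact IWH_congr ((hC _).mul (hX2.mul h0)) (show 0 + (3 + k) = k + 3 by omega)

open MvPolynomial in
lemma PP_coeff : ∀ r, MvPolynomial.coeff (Finsupp.single 0 r) (PP r) = 1 := by
  intro r
  classical
  induction r using Nat.strong_induction_on with
  | _ r ih =>
    match r with
    | 0 => simp [PP]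
    | 1 => simp [PP]
    | 2 =>
      rw [PP, MvPolynomial.coeff_add, MvPolynomial.X_pow_eq_monomial,
        MvPolynomial.coeff_monomial, if_pos rfl, MvPolynomial.coeff_X']
      rw [if_neg, add_zero]
      intro h
      have := congrArg (fun f : Fin 3 →₀ ℕ => f 1) h
      simp [Finsupp.single_apply] at this
    | (k + 3) =>
      have h2 := ih (k + 2) (by omega)
      rw [PP, MvPolynomial.coeff_add, MvPolynomial.coeff_add]
      have t1 : MvPolynomial.coeff (Finsupp.single (0 : Fin 3) (k + 3))
          (MvPolynomial.X 0 * PP (k + 2)) = 1 := by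
        rw [show (Finsupp.single (0 : Fin 3) (k + 3))
            = Finsupp.single 0 1 + Finsupp.single 0 (k + 2) from by
          rw [show k + 3 = 1 + (k + 2) from by omega, Finsupp.single_add],
          MvPolynomial.coeff_X_mul, h2]
      have t2 : MvPolynomial.coeff (Finsupp.single (0 : Fin 3) (k + 3))
          (MvPolynomial.X 1 * PP (k + 1)) = 0 := by
        rw [MvPolynomial.coeff_X_mul', if_neg]
        simp [Finsupp.mem_support_iff, Finsupp.single_apply]
      have t3 : MvPolynomial.coeff (Finsupp.single (0 : Fin 3) (k + 3))
          (MvPolynomial.X 2 * PP k) = 0 := by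
        rw [MvPolynomial.coeff_X_mul', if_neg]
        simp [Finsupp.mem_support_iff, Finsupp.single_apply]
      rw [t1, ← map_natCast (MvPolynomial.C : ℚ →+* R3), MvPolynomial.coeff_C_mul, t2,
        ← map_natCast (MvPolynomial.C : ℚ →+* R3), MvPolynomial.coeff_C_mul, t3]
      ring

-- ### support lemmas

lemma fin3_ext {d e : Fin 3 →₀ ℕ} (h0 : d 0 = e 0) (h1 : d 1 = e 1) (h2 : d 2 = e 2) :
    d = e := by
  ext i
  fin_cases i
  · exact h0
  · exact h1
  · exact h2

lemma supp_hom {p : R3} {n : ℕ} (hp : p.IsWeightedHomogeneous w3 n) {d : Fin 3 →₀ ℕ}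
    (hd : d ∈ p.support) : d 0 + 2 * d 1 + 3 * d 2 = n := by
  have h := hp (MvPolynomial.mem_support_iff.mp hd)
  rw [weight3] at h
  omega

lemma supp_X_mul {i : Fin 3} {p : R3} {d : Fin 3 →₀ ℕ}
    (hd : d ∈ (MvPolynomial.X i * p).support) : 1 ≤ d i := by
  classical
  rw [MvPolynomial.mem_support_iff, MvPolynomial.coeff_X_mul'] at hd
  by_contra h
  have hz : d i = 0 := by omega
  rw [if_neg (fun hmem => (Finsupp.mem_support_iff.mp hmem) hz)] at hd
  exact hd rfl

-- ### monicity lemmas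

lemma mono1 (r : ℕ) : IsMonicWithLeadingMonomial (PP r) (Finsupp.single 0 r) := by
  constructor
  · exact PP_coeff r
  · intro m' hm' hne
    have hw := supp_hom (PP_hom r) hm'
    have h0 : (Finsupp.single (0 : Fin 3) r) 0 = r := by simp
    have h1 : (Finsupp.single (0 : Fin 3) r) 1 = 0 := by simp [Finsupp.single_apply]
    have h2 : (Finsupp.single (0 : Fin 3) r) 2 = 0 := by simp [Finsupp.single_apply]
    by_cases hlt : m' 0 + m' 1 + m' 2 < r
    · exact Or.inl (by rw [h0, h1, h2]; omega)
    · exact absurd (fin3_ext (by rw [h0]; omega) (by rw [h1]; omega) (by rw [h2]; omega)) hne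

lemma mono3 (r : ℕ) : IsMonicWithLeadingMonomial
    (MvPolynomial.X 2 * PP r) (Finsupp.single 0 r + Finsupp.single 2 1) := by
  classical
  have h0 : ((Finsupp.single 0 r + Finsupp.single 2 1 : Fin 3 →₀ ℕ)) 0 = r := by
    simp [Finsupp.single_apply]
  have h1 : ((Finsupp.single 0 r + Finsupp.single 2 1 : Fin 3 →₀ ℕ)) 1 = 0 := by
    simp [Finsupp.single_apply]
  have h2 : ((Finsupp.single 0 r + Finsupp.single 2 1 : Fin 3 →₀ ℕ)) 2 = 1 := by
    simp [Finsupp.single_apply]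
  constructor
  · rw [MvPolynomial.coeff_X_mul', if_pos (Finsupp.mem_support_iff.mpr (by rw [h2]; omega)),
      add_tsub_cancel_right]
    exact PP_coeff r
  · intro m' hm' hne
    have hw := supp_hom ((IWH_congr (MvPolynomial.isWeightedHomogeneous_X ℚ w3 2) rfl :
        (MvPolynomial.X (2 : Fin 3) : R3).IsWeightedHomogeneous w3 3).mul (PP_hom r)) hm'
    have hx := supp_X_mul hm'
    by_cases hlt : m' 0 + m' 1 + m' 2 < r + 1
    · exact Or.inl (by rw [h0, h1, h2]; omega)
    · exact absurd (fin3_ext (by rw [h0]; omega) (by rw [h1]; omega) (by rw [h2]; omega)) hne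

lemma mono2 (r : ℕ) (c : ℚ) : IsMonicWithLeadingMonomial
    (MvPolynomial.X 1 * PP (r + 1) + MvPolynomial.C c * (MvPolynomial.X 2 * PP r))
    (Finsupp.single 0 (r + 1) + Finsupp.single 1 1) := by
  classical
  have h0 : ((Finsupp.single 0 (r + 1) + Finsupp.single 1 1 : Fin 3 →₀ ℕ)) 0 = r + 1 := by
    simp [Finsupp.single_apply]
  have h1 : ((Finsupp.single 0 (r + 1) + Finsupp.single 1 1 : Fin 3 →₀ ℕ)) 1 = 1 := by
    simp [Finsupp.single_apply]
  have h2 : ((Finsupp.single 0 (r + 1) + Finsupp.single 1 1 : Fin 3 →₀ ℕ)) 2 = 0 := by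
    simp [Finsupp.single_apply]
  have hmm : (Finsupp.single (0 : Fin 3) (r + 1) + Finsupp.single 1 1)
      = Finsupp.single 1 1 + Finsupp.single 0 (r + 1) := by rw [add_comm]
  constructor
  · rw [MvPolynomial.coeff_add, hmm, MvPolynomial.coeff_X_mul, PP_coeff,
      MvPolynomial.coeff_C_mul, MvPolynomial.coeff_X_mul', if_neg, mul_zero, add_zero]
    intro hmem
    have := Finsupp.mem_support_iff.mp hmem
    rw [← hmm, h2] at this
    exact this rfl
  · intro m' hm' hne
    have hsub := MvPolynomial.support_add hm'
    rw [Finset.mem_union] at hsub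
    have key : m' 0 + 2 * m' 1 + 3 * m' 2 = r + 3 ∧ (1 ≤ m' 1 ∨ 1 ≤ m' 2) := by
      rcases hsub with hs | hs
      · refine ⟨?_, Or.inl (supp_X_mul hs)⟩
        have := supp_hom ((IWH_congr (MvPolynomial.isWeightedHomogeneous_X ℚ w3 1) rfl :
          (MvPolynomial.X (1 : Fin 3) : R3).IsWeightedHomogeneous w3 2).mul (PP_hom (r + 1))) hs
        omega
      · have hs' : m' ∈ (MvPolynomial.X (2 : Fin 3) * PP r).support := by
          rw [MvPolynomial.mem_support_iff] at hs ⊢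
          intro hzero
          rw [MvPolynomial.coeff_C_mul, hzero, mul_zero] at hs
          exact hs rfl
        refine ⟨?_, Or.inr (supp_X_mul hs')⟩
        have := supp_hom ((IWH_congr (MvPolynomial.isWeightedHomogeneous_X ℚ w3 2) rfl :
          (MvPolynomial.X (2 : Fin 3) : R3).IsWeightedHomogeneous w3 3).mul (PP_hom r)) hs'
        omega
    obtain ⟨hw, hx⟩ := key
    by_cases hlt : m' 0 + m' 1 + m' 2 < r + 2
    · exact Or.inl (by rw [h0, h1, h2]; omega)
    · exact absurd (fin3_ext (by rw [h0]; omega) (by rw [h1]; omega) (by rw [h2]; omega)) hne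

lemma monoX1 : IsMonicWithLeadingMonomial (MvPolynomial.X 1)
    (Finsupp.single 0 0 + Finsupp.single 1 1) := by
  classical
  have hmm : (Finsupp.single (0 : Fin 3) 0 + Finsupp.single 1 1) = Finsupp.single 1 1 := by
    rw [Finsupp.single_zero, zero_add]
  rw [hmm]
  constructor
  · exact MvPolynomial.coeff_X_same (R := ℚ) (1 : Fin 3)
  · intro m' hm' hne
    rw [MvPolynomial.support_X, Finset.mem_singleton] at hm'
    exact absurd hm' hne

def QQ2 (g : ℕ) : R3 := MvPolynomial.X 1 * PP (g - 1)
  + MvPolynomial.C (((2 * (g - 1) : ℕ) : ℚ) / ((g : ℕ) : ℚ)) * (MvPolynomial.X 2 * PP (g - 2))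

lemma algC (q : ℚ) : algebraMap R3 K3 (MvPolynomial.C q) = (q : K3) :=
  eq_ratCast ((algebraMap R3 K3).comp (MvPolynomial.C : ℚ →+* R3)) q

lemma QQ2_one : QQ2 1 = MvPolynomial.X 1 := by
  rw [QQ2]
  norm_num [PP]

lemma f2_eq_one : algebraMap R3 K3 (QQ2 1) = f2 1 := by
  rw [QQ2_one, be_def, f2, PhiD_two, PhiD_one]
  push_cast
  ring

lemma f2_eq_ge (h : ℕ) : algebraMap R3 K3 (QQ2 (h + 2)) = f2 (h + 2) := by
  have hrec := PhiD_rec h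
  have hne2 : ((h : K3) + 2) ≠ 0 := by
    have hn : ((h + 2 : ℕ) : K3) ≠ 0 := Nat.cast_ne_zero.mpr (by omega)
    push_cast at hn
    exact hn
  have hgoal : PhiD (h + 3) - al * PhiD (h + 2)
      = ((h : K3) + 2) ^ 2 * be * PhiD (h + 1)
        + 2 * ((h : K3) + 2) * ((h : K3) + 1) * ga * PhiD h := by
    linear_combination hrec
  rw [QQ2, show h + 2 - 1 = h + 1 from rfl, show h + 2 - 2 = h from rfl,
    map_add, map_mul, map_mul, map_mul, be_def, ga_def, PP_spec, PP_spec, algC, f2,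
    show h + 2 + 1 = h + 3 from rfl, hgoal]
  push_cast
  field_simp

lemma f3_eq (h : ℕ) : algebraMap R3 K3 (MvPolynomial.X 2 * PP h) = f3 (h + 1) := by
  have hrec := PhiD_rec h
  have hne1 : ((h : K3) + 1) ≠ 0 := by
    have hn : ((h + 1 : ℕ) : K3) ≠ 0 := Nat.cast_ne_zero.mpr (by omega)
    push_cast at hn
    exact hn
  have hne2 : ((h : K3) + 2) ≠ 0 := by
    have hn : ((h + 2 : ℕ) : K3) ≠ 0 := Nat.cast_ne_zero.mpr (by omega)
    push_cast at hn
    exact hn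
  rw [map_mul, ga_def, PP_spec, f3, show h + 1 + 2 = h + 3 from rfl,
    show h + 1 + 1 = h + 2 from rfl]
  push_cast
  have hb : ((h : K3) + 1 + 1) = ((h : K3) + 2) := by ring
  have hne2' : ((h : K3) + 1 + 1) ≠ 0 := by rw [hb]; exact hne2
  have hc : (2 * ((h : K3) + 1) * ((h : K3) + 1 + 1)) ≠ 0 :=
    mul_ne_zero (mul_ne_zero two_ne_zero hne1) hne2'
  have hE : (PhiD (h + 3) - al * PhiD (h + 2) - ((h : K3) + 1 + 1) ^ 2 * be * PhiD (h + 1))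
      = 2 * ((h : K3) + 1) * ((h : K3) + 1 + 1) * (ga * PhiD h) := by
    linear_combination hrec
  rw [hE, one_div, inv_mul_cancel_left₀ hc]


/-- For every `g ≥ 1`, in the graded reverse lexicographic order the
polynomials `f_1^g, f_2^g, f_3^g` are monic with leading monomials
`α^g`, `α^{g-1}β` and `α^{g-1}γ` respectively. -/
theorem statement6 (g : ℕ) (hg : 1 ≤ g) (F1 F2 F3 : R3)
    (hF1 : algebraMap R3 K3 F1 = f1 g) (hF2 : algebraMap R3 K3 F2 = f2 g)
    (hF3 : algebraMap R3 K3 F3 = f3 g) :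
    IsMonicWithLeadingMonomial F1 (Finsupp.single 0 g) ∧
    IsMonicWithLeadingMonomial F2
      (Finsupp.single 0 (g - 1) + Finsupp.single 1 1) ∧
    IsMonicWithLeadingMonomial F3
      (Finsupp.single 0 (g - 1) + Finsupp.single 2 1) := by

  have hg1 : F1 = PP g := IsFractionRing.injective R3 K3 (by rw [hF1, PP_spec]; rfl)
  have hg3 : F3 = MvPolynomial.X 2 * PP (g - 1) := by
    apply IsFractionRing.injective R3 K3
    obtain ⟨h, rfl⟩ : ∃ h, g = h + 1 := ⟨g - 1, by omega⟩
    rw [hF3, Nat.add_sub_cancel, f3_eq]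
  have hg2 : F2 = QQ2 g := by
    apply IsFractionRing.injective R3 K3
    rw [hF2]
    rcases Nat.lt_or_ge g 2 with hlt | hge
    · have he : g = 1 := by omega
      subst he
      rw [f2_eq_one]
    · obtain ⟨h, rfl⟩ : ∃ h, g = h + 2 := ⟨g - 2, by omega⟩
      rw [f2_eq_ge]
  refine ⟨hg1 ▸ mono1 g, ?_, hg3 ▸ mono3 (g - 1)⟩
  rw [hg2]
  rcases Nat.lt_or_ge g 2 with hlt | hge
  · have he : g = 1 := by omega
    subst he
    rw [QQ2_one]
    exact monoX1
  · obtain ⟨h, rfl⟩ : ∃ h, g = h + 2 := ⟨g - 2, by omega⟩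
    exact mono2 h _
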